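/- Let H ≠ 0 be a real number. Define h = −1/(2H), ρ(r) = √(2r² + 1)/(2H), λ(r) = (−√2·r + 2√2·arctan r − arctan(√2·r))/(2H), φ(r,t) = √2·H·t + √2·arctan r − arctan(√2·r), and X(r,t) = (λ(r) + h·φ(r,t), ρ(r)·cos φ(r,t), ρ(r)·sin φ(r,t)) for (r,t) ∈ ℝ². Then the singular points of X are exactly the points with r = 0, and every singular point of X is a (2,5)-cuspidal edge. -/

import Mathlib

/-!
Write `θ = √2 H t + g(r)` with `g(r) = √2 arctan r − arctan (√2 r)`. Then `X` is the helicoidal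
surface `(λ(r) + cθ, ρ(r) cos θ, ρ(r) sin θ)` with `c = −1/(2H)`, and for such a surface
`X_r × X_t` vanishes exactly where `ρ' = 0` and `ρ λ' = 0`. Here `ρ'(r) = r / (H √(2r² + 1))` and
`λ'(0) = 0`, so the singular set is `{r = 0}`.

Near `(0, t₀)` use coordinates `(u, v)` with `r = v` and `θ = u + √2 H t₀`, and undo the screw
motion along the `x₀`-axis: the surface becomes `(λ(v) − u/(2H), ρ(v) cos u, ρ(v) sin u)`. Polar
coordinates recover `u` and, since `(2Hρ(v))² = 2v² + 1`, also `v²`. The arctan series gives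
`λ(v) = v⁵ E(v²)` with `E` analytic near `0` and `E(0) = −√2/(5H) ≠ 0`, so dividing
`x₀ + u/(2H)` by `E(v²)` recovers `v⁵`.
-/

noncomputable section

open Set

/-- Euclidean inner product on `ℝ³`. -/
def dot3 (a b : Fin 3 → ℝ) : ℝ := a 0 * b 0 + a 1 * b 1 + a 2 * b 2

/-- Determinant of the 3×3 matrix with the given rows. -/
def det3 (a b c : Fin 3 → ℝ) : ℝ := Matrix.det (Matrix.of ![a, b, c])

/-- Partial derivative with respect to the first variable. -/
def pdU (X : ℝ × ℝ → Fin 3 → ℝ) (p : ℝ × ℝ) : Fin 3 → ℝ := fderiv ℝ X p ((1:ℝ), (0:ℝ))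

/-- Partial derivative with respect to the second variable. -/
def pdV (X : ℝ × ℝ → Fin 3 → ℝ) (p : ℝ × ℝ) : Fin 3 → ℝ := fderiv ℝ X p ((0:ℝ), (1:ℝ))

/-- Directional derivative of `X` along the vector field `ζ`. -/
def vfD (ζ : ℝ × ℝ → ℝ × ℝ) (X : ℝ × ℝ → Fin 3 → ℝ) : ℝ × ℝ → Fin 3 → ℝ :=
  fun p => fderiv ℝ X p (ζ p)

/-- `k`-fold iterated directional derivative of `X` along the vector field `ζ`. -/
def vfDIter (ζ : ℝ × ℝ → ℝ × ℝ) (k : ℕ) (X : ℝ × ℝ → Fin 3 → ℝ) : ℝ × ℝ → Fin 3 → ℝ :=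
  (vfD ζ)^[k] X

/-- `p` is a singular point of `X` : the differential has rank < 2, i.e. the two
partial derivative vectors are linearly dependent. -/
def IsSingularPt (X : ℝ × ℝ → Fin 3 → ℝ) (p : ℝ × ℝ) : Prop :=
  ¬ LinearIndependent ℝ ![pdU X p, pdV X p]

/-- `f` is a diffeomorphism from the open set `s` onto the open set `t`. -/
def IsDiffeoOn {E F : Type*} [NormedAddCommGroup E] [NormedSpace ℝ E]
    [NormedAddCommGroup F] [NormedSpace ℝ F] (f : E → F) (s : Set E) (t : Set F) : Prop :=
  IsOpen s ∧ IsOpen t ∧ ContDiffOn ℝ (⊤:ℕ∞) f s ∧ Set.BijOn f s t ∧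
    ∃ finv : F → E, ContDiffOn ℝ (⊤:ℕ∞) finv t ∧ (∀ x ∈ s, finv (f x) = x) ∧
      ∀ y ∈ t, f (finv y) = y

/-- `p` is a (2,5)-cuspidal edge of `X` (with domain `D`): up to diffeomorphisms of the
source (taking `0` to `p`, with image inside `D`) and of the target, `X` is
`(u,v) ↦ (u, v², v⁵)`. -/
def IsCuspidalEdge25 (D : Set (ℝ × ℝ)) (X : ℝ × ℝ → Fin 3 → ℝ) (p : ℝ × ℝ) : Prop :=
  ∃ (s t : Set (ℝ × ℝ)) (φ : ℝ × ℝ → ℝ × ℝ)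
    (s' t' : Set (Fin 3 → ℝ)) (Φ : (Fin 3 → ℝ) → (Fin 3 → ℝ)),
    ((0:ℝ), (0:ℝ)) ∈ s ∧ φ ((0:ℝ), (0:ℝ)) = p ∧ t ⊆ D ∧ IsDiffeoOn φ s t ∧
    X p ∈ s' ∧ IsDiffeoOn Φ s' t' ∧
    ∀ w ∈ s, X (φ w) ∈ s' ∧ Φ (X (φ w)) = ![w.1, w.2 ^ 2, w.2 ^ 5]

/-- `X` is a frontal on the open set `U` : it is smooth and locally admits a smooth unit
normal vector field orthogonal to both partial derivatives. -/
def IsFrontalOn (X : ℝ × ℝ → Fin 3 → ℝ) (U : Set (ℝ × ℝ)) : Prop :=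
  ContDiffOn ℝ (⊤:ℕ∞) X U ∧ ∀ q ∈ U, ∃ V, IsOpen V ∧ q ∈ V ∧ V ⊆ U ∧
    ∃ n : ℝ × ℝ → Fin 3 → ℝ, ContDiffOn ℝ (⊤:ℕ∞) n V ∧
      ∀ x ∈ V, dot3 (n x) (n x) = 1 ∧ dot3 (n x) (pdU X x) = 0 ∧ dot3 (n x) (pdV X x) = 0

/-- `p` is a non-degenerate singular point of `X` : it is singular and the signed area
density `λ = det(X_u, X_v, n)` (for a local unit normal `n`) has nonvanishing
differential at `p`. -/
def IsNondegSing (X : ℝ × ℝ → Fin 3 → ℝ) (U : Set (ℝ × ℝ)) (p : ℝ × ℝ) : Prop :=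
  IsSingularPt X p ∧ ∃ V, IsOpen V ∧ p ∈ V ∧ V ⊆ U ∧
    ∃ n : ℝ × ℝ → Fin 3 → ℝ, ContDiffOn ℝ (⊤:ℕ∞) n V ∧
      (∀ x ∈ V, dot3 (n x) (n x) = 1 ∧ dot3 (n x) (pdU X x) = 0 ∧
        dot3 (n x) (pdV X x) = 0) ∧
      fderiv ℝ (fun x => det3 (pdU X x) (pdV X x) (n x)) p ≠ 0

/-- `ρ(r) = √(2r² + 1)/(2H)`. -/
def ρ15 (H r : ℝ) : ℝ := Real.sqrt (2 * r ^ 2 + 1) / (2 * H)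

/-- `λ(r) = (−√2·r + 2√2·arctan r − arctan(√2·r))/(2H)`. -/
def lam15 (H r : ℝ) : ℝ :=
  (-(Real.sqrt 2 * r) + 2 * Real.sqrt 2 * Real.arctan r
    - Real.arctan (Real.sqrt 2 * r)) / (2 * H)

/-- `φ(r,t) = √2·H·t + √2·arctan r − arctan(√2·r)`. -/
def φ15 (H r t : ℝ) : ℝ :=
  Real.sqrt 2 * H * t + Real.sqrt 2 * Real.arctan r - Real.arctan (Real.sqrt 2 * r)

/-- The conjugate of the spacelike Delaunay surface with lightlike axis, profile
`ζ(r) = (−r/(1+r²) + arctan r)/(8H²)`, with `h = −1/(2H)`: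
`X(r,t) = (λ(r) + h·φ(r,t), ρ(r)·cos φ(r,t), ρ(r)·sin φ(r,t))`. -/
def X15 (H : ℝ) (p : ℝ × ℝ) : Fin 3 → ℝ :=
  ![lam15 H p.1 + -(1 / (2 * H)) * φ15 H p.1 p.2,
    ρ15 H p.1 * Real.cos (φ15 H p.1 p.2),
    ρ15 H p.1 * Real.sin (φ15 H p.1 p.2)]

open Real

theorem IsDiffeoOn.of_invOn {E F : Type*} [NormedAddCommGroup E] [NormedSpace ℝ E]
    [NormedAddCommGroup F] [NormedSpace ℝ F] {f : E → F} {g : F → E} {s : Set E} {t : Set F}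
    (hs : IsOpen s) (ht : IsOpen t) (hf : ContDiffOn ℝ (⊤ : ℕ∞) f s)
    (hg : ContDiffOn ℝ (⊤ : ℕ∞) g t) (hfst : MapsTo f s t) (hgts : MapsTo g t s)
    (hinv : InvOn g f s t) : IsDiffeoOn f s t :=
  ⟨hs, ht, hf, hinv.bijOn hfst hgts, g, hg, fun _ hx => hinv.1 hx, fun _ hy => hinv.2 hy⟩

theorem IsDiffeoOn.comp {E F G : Type*} [NormedAddCommGroup E] [NormedSpace ℝ E]
    [NormedAddCommGroup F] [NormedSpace ℝ F] [NormedAddCommGroup G] [NormedSpace ℝ G]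
    {f : E → F} {g : F → G} {s : Set E} {t : Set F} {u : Set G}
    (hg : IsDiffeoOn g t u) (hf : IsDiffeoOn f s t) : IsDiffeoOn (g ∘ f) s u := by
  obtain ⟨hs, -, hfc, hfb, finv, hfinvc, hfl, hfr⟩ := hf
  obtain ⟨-, hu, hgc, hgb, ginv, hginvc, hgl, hgr⟩ := hg
  have hginv : MapsTo ginv u t := by
    intro y hy
    obtain ⟨x, hx, rfl⟩ := hgb.surjOn hy
    rwa [hgl x hx]
  refine ⟨hs, hu, hgc.comp hfc hfb.mapsTo, hgb.comp hfb, finv ∘ ginv,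
    hfinvc.comp hginvc hginv, fun x hx => ?_, fun y hy => ?_⟩
  · simp only [Function.comp_apply, hgl _ (hfb.mapsTo hx), hfl x hx]
  · simp only [Function.comp_apply, hfr _ (hginv hy), hgr y hy]

theorem pdU_eq_of_hasDerivAt {X : ℝ × ℝ → Fin 3 → ℝ} {p : ℝ × ℝ} {X' : Fin 3 → ℝ}
    (hX : DifferentiableAt ℝ X p) (h : HasDerivAt (fun r => X (r, p.2)) X' p.1) :
    pdU X p = X' := by
  have hc : HasDerivAt (fun r : ℝ => (r, p.2)) ((1 : ℝ), (0 : ℝ)) p.1 :=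
    (hasDerivAt_id p.1).prodMk (hasDerivAt_const p.1 p.2)
  exact ((hX.hasFDerivAt.comp_hasDerivAt p.1 hc)).unique h

theorem pdV_eq_of_hasDerivAt {X : ℝ × ℝ → Fin 3 → ℝ} {p : ℝ × ℝ} {X' : Fin 3 → ℝ}
    (hX : DifferentiableAt ℝ X p) (h : HasDerivAt (fun t => X (p.1, t)) X' p.2) :
    pdV X p = X' := by
  have hc : HasDerivAt (fun t : ℝ => (p.1, t)) ((0 : ℝ), (1 : ℝ)) p.2 :=
    (hasDerivAt_const p.2 p.1).prodMk (hasDerivAt_id p.2)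
  exact ((hX.hasFDerivAt.comp_hasDerivAt p.2 hc)).unique h

section Helicoidal

variable (a ρ g : ℝ → ℝ) (c k : ℝ)

def helicoidalSurface (p : ℝ × ℝ) : Fin 3 → ℝ :=
  ![a p.1 + c * (k * p.2 + g p.1), ρ p.1 * cos (k * p.2 + g p.1),
    ρ p.1 * sin (k * p.2 + g p.1)]

variable {a ρ g c k}

theorem isSingularPt_helicoidalSurface_iff {p : ℝ × ℝ} {a' ρ' g' : ℝ}
    (ha : HasDerivAt a a' p.1) (hρ : HasDerivAt ρ ρ' p.1) (hg : HasDerivAt g g' p.1)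
    (hc : c ≠ 0) (hk : k ≠ 0) :
    IsSingularPt (helicoidalSurface a ρ g c k) p ↔ ρ' = 0 ∧ ρ p.1 * a' = 0 := by
  set θ := k * p.2 + g p.1
  have hX : DifferentiableAt ℝ (helicoidalSurface a ρ g c k) p := by
    have ha := ha.differentiableAt
    have hρ := hρ.differentiableAt
    have hg := hg.differentiableAt
    refine differentiableAt_pi.2 fun i => ?_
    fin_cases i <;> simp only [helicoidalSurface, Fin.reduceFinMk, Matrix.cons_val] <;> fun_prop
  have hU : pdU (helicoidalSurface a ρ g c k) p =
      ![a' + c * g', ρ' * cos θ - ρ p.1 * g' * sin θ, ρ' * sin θ + ρ p.1 * g' * cos θ] := by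
    have hθ : HasDerivAt (fun r => k * p.2 + g r) g' p.1 := hg.const_add _
    refine pdU_eq_of_hasDerivAt hX (hasDerivAt_pi.2 fun i => ?_)
    fin_cases i
    · exact ha.add (hθ.const_mul c)
    · refine (hρ.mul hθ.cos).congr_deriv ?_
      simp only [θ, Fin.reduceFinMk, Matrix.cons_val]
      ring
    · refine (hρ.mul hθ.sin).congr_deriv ?_
      simp only [θ, Fin.reduceFinMk, Matrix.cons_val]
      ring
  have hV : pdV (helicoidalSurface a ρ g c k) p =
      ![c * k, -(ρ p.1 * k * sin θ), ρ p.1 * k * cos θ] := by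
    have hθ : HasDerivAt (fun t => k * t + g p.1) k p.2 := by
      simpa using ((hasDerivAt_id p.2).const_mul k).add_const (g p.1)
    refine pdV_eq_of_hasDerivAt hX (hasDerivAt_pi.2 fun i => ?_)
    fin_cases i
    · exact ((hθ.const_mul c).const_add (a p.1))
    · refine (hθ.cos.const_mul (ρ p.1)).congr_deriv ?_
      simp only [θ, Fin.reduceFinMk, Matrix.cons_val]
      ring
    · refine (hθ.sin.const_mul (ρ p.1)).congr_deriv ?_
      simp only [θ, Fin.reduceFinMk, Matrix.cons_val]
      ring
  have hpyth := sin_sq_add_cos_sq θ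
  have hcross : crossProduct (pdU (helicoidalSurface a ρ g c k) p)
      (pdV (helicoidalSurface a ρ g c k) p) = k • ![ρ p.1 * ρ',
        c * ρ' * sin θ - ρ p.1 * a' * cos θ, -(ρ p.1 * a' * sin θ + c * ρ' * cos θ)] := by
    rw [hU, hV, cross_apply]
    ext i
    fin_cases i <;> simp only [Fin.reduceFinMk, Matrix.cons_val, Pi.smul_apply, smul_eq_mul]
    · linear_combination (k * ρ p.1 * ρ') * hpyth
    all_goals ring
  rw [IsSingularPt, ← crossProduct_ne_zero_iff_linearIndependent, not_not, hcross,
    smul_eq_zero_iff_right hk]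
  simp only [Matrix.cons_eq_zero_iff, Matrix.zero_empty, and_true]
  constructor
  · rintro ⟨-, h1, h2⟩
    have hcρ' : c * ρ' = 0 := by
      linear_combination sin θ * h1 - cos θ * h2 - c * ρ' * hpyth
    refine ⟨(mul_eq_zero.1 hcρ').resolve_left hc, ?_⟩
    linear_combination -cos θ * h1 - sin θ * h2 - ρ p.1 * a' * hpyth
  · rintro ⟨rfl, h⟩
    refine ⟨by simp, ?_, ?_⟩
    · linear_combination -cos θ * h
    · linear_combination -sin θ * h

def screwMotion (c θ : ℝ) (x : Fin 3 → ℝ) : Fin 3 → ℝ :=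
  ![x 0 - c * θ, x 1 * cos θ + x 2 * sin θ, -(x 1 * sin θ) + x 2 * cos θ]

theorem screwMotion_neg_screwMotion (c θ : ℝ) (x : Fin 3 → ℝ) :
    screwMotion c (-θ) (screwMotion c θ x) = x := by
  ext i
  fin_cases i <;> simp only [screwMotion, Fin.reduceFinMk, Matrix.cons_val, cos_neg, sin_neg]
  · ring
  · linear_combination x 1 * sin_sq_add_cos_sq θ
  · linear_combination x 2 * sin_sq_add_cos_sq θ

theorem screwMotion_screwMotion_neg (c θ : ℝ) (x : Fin 3 → ℝ) :
    screwMotion c θ (screwMotion c (-θ) x) = x := by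
  simpa using screwMotion_neg_screwMotion c (-θ) x

theorem contDiff_screwMotion (c θ : ℝ) : ContDiff ℝ (⊤ : ℕ∞) (screwMotion c θ) := by
  refine contDiff_pi.2 fun i => ?_
  fin_cases i <;> simp only [screwMotion, Fin.reduceFinMk, Matrix.cons_val] <;> fun_prop

theorem isDiffeoOn_screwMotion (c θ : ℝ) {V : Set (Fin 3 → ℝ)} (hV : IsOpen V) :
    IsDiffeoOn (screwMotion c θ) (screwMotion c θ ⁻¹' V) V := by
  refine .of_invOn (hV.preimage (contDiff_screwMotion c θ).continuous) hV
    (contDiff_screwMotion c θ).contDiffOn (contDiff_screwMotion c (-θ)).contDiffOn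
    (fun _ hx => hx) (fun y hy => by rwa [mem_preimage, screwMotion_screwMotion_neg])
    ⟨fun x _ => screwMotion_neg_screwMotion c θ x, fun y _ => screwMotion_screwMotion_neg c θ y⟩

def helicoidalChart (g : ℝ → ℝ) (k t₀ : ℝ) (w : ℝ × ℝ) : ℝ × ℝ :=
  (w.2, t₀ + (w.1 - g w.2) / k)

def helicoidalChartInv (g : ℝ → ℝ) (k t₀ : ℝ) (q : ℝ × ℝ) : ℝ × ℝ :=
  (k * (q.2 - t₀) + g q.1, q.1)

theorem isDiffeoOn_helicoidalChart (hg : ContDiff ℝ (⊤ : ℕ∞) g) (hk : k ≠ 0) (t₀ : ℝ)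
    {s : Set (ℝ × ℝ)} (hs : IsOpen s) :
    IsDiffeoOn (helicoidalChart g k t₀) s (helicoidalChartInv g k t₀ ⁻¹' s) := by
  have hleft : ∀ w, helicoidalChartInv g k t₀ (helicoidalChart g k t₀ w) = w := fun w => by
    refine Prod.ext ?_ rfl
    simp only [helicoidalChart, helicoidalChartInv]
    field_simp
    ring
  have hright : ∀ q, helicoidalChart g k t₀ (helicoidalChartInv g k t₀ q) = q := fun q => by
    refine Prod.ext rfl ?_
    simp only [helicoidalChart, helicoidalChartInv]
    field_simp
    ring
  have hc : ContDiff ℝ (⊤ : ℕ∞) (helicoidalChart g k t₀) := by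
    unfold helicoidalChart; fun_prop
  have hc' : ContDiff ℝ (⊤ : ℕ∞) (helicoidalChartInv g k t₀) := by
    unfold helicoidalChartInv; fun_prop
  refine .of_invOn hs (hs.preimage hc'.continuous) hc.contDiffOn hc'.contDiffOn
    (fun w hw => by rwa [mem_preimage, hleft]) (fun _ hq => hq)
    ⟨fun w _ => hleft w, fun q _ => hright q⟩

theorem screwMotion_helicoidalSurface_helicoidalChart (hk : k ≠ 0) (t₀ : ℝ) (w : ℝ × ℝ) :
    screwMotion c (k * t₀) (helicoidalSurface a ρ g c k (helicoidalChart g k t₀ w)) =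
      ![a w.2 + c * w.1, ρ w.2 * cos w.1, ρ w.2 * sin w.1] := by
  have hθ : k * (t₀ + (w.1 - g w.2) / k) + g w.2 = w.1 + k * t₀ := by
    field_simp; ring
  ext i
  fin_cases i <;> simp only [screwMotion, helicoidalSurface, helicoidalChart, hθ, cos_add, sin_add,
    Fin.reduceFinMk, Matrix.cons_val]
  · ring
  · linear_combination ρ w.2 * cos w.1 * sin_sq_add_cos_sq (k * t₀)
  · linear_combination ρ w.2 * sin w.1 * sin_sq_add_cos_sq (k * t₀)

end Helicoidal

section ArctanTail

open FormalMultilinearSeries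

def arctanTailSeries : FormalMultilinearSeries ℝ ℝ ℝ :=
  ofScalars ℝ fun n => (-1) ^ n / (2 * n + 5)

def arctanTail : ℝ → ℝ := arctanTailSeries.sum

theorem one_le_radius_arctanTailSeries : 1 ≤ arctanTailSeries.radius := by
  have h := arctanTailSeries.le_radius_of_bound (r := 1) (C := 1) fun n => by
    rw [arctanTailSeries, ofScalars_norm, NNReal.coe_one, one_pow, mul_one, norm_div,
      norm_pow, norm_neg, norm_one, one_pow, Real.norm_eq_abs, abs_of_pos (by positivity)]
    exact div_le_one_of_le₀ (by linarith [(n.cast_nonneg : (0 : ℝ) ≤ n)]) (by positivity)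
  simpa using h

theorem hasFPowerSeriesOnBall_arctanTail :
    HasFPowerSeriesOnBall arctanTail arctanTailSeries 0 1 :=
  (arctanTailSeries.hasFPowerSeriesOnBall
    (zero_lt_one.trans_le one_le_radius_arctanTailSeries)).mono one_pos
    one_le_radius_arctanTailSeries

theorem hasSum_arctanTail {x : ℝ} (hx : |x| < 1) :
    HasSum (fun n : ℕ => (-1) ^ n / (2 * n + 5) * x ^ n) (arctanTail x) := by
  have hx' : x ∈ Metric.eball 0 1 := by simpa [mem_eball_zero_iff, enorm_eq_ofReal_abs] using hx
  simpa [arctanTailSeries, ofScalars_apply_eq, mul_comm] using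
    hasFPowerSeriesOnBall_arctanTail.hasSum hx'

theorem analyticAt_arctanTail {x : ℝ} (hx : |x| < 1) : AnalyticAt ℝ arctanTail x := by
  have hx' : x ∈ Metric.eball 0 1 := by simpa [mem_eball_zero_iff, enorm_eq_ofReal_abs] using hx
  simpa using hasFPowerSeriesOnBall_arctanTail.analyticAt_of_mem hx'

theorem arctanTail_zero : arctanTail 0 = 1 / 5 :=
  (ofScalarsSum_zero (E := ℝ) _).trans (by norm_num)

theorem arctan_eq_arctanTail {x : ℝ} (hx : |x| < 1) :
    arctan x = x - x ^ 3 / 3 + x ^ 5 * arctanTail (x ^ 2) := by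
  have hx2 : |x ^ 2| < 1 := by
    rw [abs_pow]; exact pow_lt_one₀ (abs_nonneg x) hx two_ne_zero
  have htail := (hasSum_arctanTail hx2).mul_left (x ^ 5)
  have hseries := (hasSum_nat_add_iff' 2).2 (Real.hasSum_arctan (x := x) (by simpa using hx))
  have hterms : (fun n : ℕ => x ^ 5 * ((-1) ^ n / (2 * n + 5) * (x ^ 2) ^ n)) =
      fun n => (-1) ^ (n + 2) * x ^ (2 * (n + 2) + 1) / ((2 * (n + 2) + 1 : ℕ) : ℝ) := by
    ext n
    push_cast
    ring
  rw [hterms] at htail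
  have h := hseries.unique htail
  norm_num [Finset.sum_range_succ] at h
  linear_combination h

end ArctanTail

theorem sqrt_sq_mul_div_mul_cos_sin_arctan {c x y : ℝ} (hcx : 0 < c * x) :
    √(c ^ 2 * (x ^ 2 + y ^ 2)) / c * cos (arctan (y / x)) = x ∧
      √(c ^ 2 * (x ^ 2 + y ^ 2)) / c * sin (arctan (y / x)) = y := by
  have hc : c ≠ 0 := by rintro rfl; simp at hcx
  have hx : x ≠ 0 := by rintro rfl; simp at hcx
  have hs : 0 < √(1 + (y / x) ^ 2) := by positivity
  have hsqrt : √(c ^ 2 * (x ^ 2 + y ^ 2)) = c * x * √(1 + (y / x) ^ 2) := by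
    rw [show c ^ 2 * (x ^ 2 + y ^ 2) = (c * x) ^ 2 * (1 + (y / x) ^ 2) by field_simp,
      sqrt_mul (sq_nonneg _), sqrt_sq hcx.le]
  rw [hsqrt, cos_arctan, sin_arctan]
  constructor <;> field_simp

section CuspChart

variable {H ε : ℝ} {E : ℝ → ℝ}

def radialParam (H : ℝ) (y : Fin 3 → ℝ) : ℝ := (4 * H ^ 2 * (y 1 ^ 2 + y 2 ^ 2) - 1) / 2

theorem two_mul_radialParam_add_one (H : ℝ) (y : Fin 3 → ℝ) :
    2 * radialParam H y + 1 = (2 * H) ^ 2 * (y 1 ^ 2 + y 2 ^ 2) := by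
  unfold radialParam; ring

def cuspChart (H : ℝ) (E : ℝ → ℝ) (y : Fin 3 → ℝ) : Fin 3 → ℝ :=
  ![arctan (y 2 / y 1), radialParam H y,
    (y 0 + arctan (y 2 / y 1) / (2 * H)) / E (radialParam H y)]

def cuspChartInv (H : ℝ) (E : ℝ → ℝ) (z : Fin 3 → ℝ) : Fin 3 → ℝ :=
  ![z 2 * E (z 1) - z 0 / (2 * H), √(2 * z 1 + 1) / (2 * H) * cos (z 0),
    √(2 * z 1 + 1) / (2 * H) * sin (z 0)]

def cuspChartSource (H ε : ℝ) : Set (Fin 3 → ℝ) :=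
  {y | 0 < H * y 1 ∧ radialParam H y ∈ Ioo (-ε) ε}

def cuspChartTarget (ε : ℝ) : Set (Fin 3 → ℝ) :=
  {z | z 0 ∈ Ioo (-(π / 2)) (π / 2) ∧ z 1 ∈ Ioo (-ε) ε}

theorem isOpen_cuspChartSource (H ε : ℝ) : IsOpen (cuspChartSource H ε) := by
  have h : Continuous (radialParam H) := by unfold radialParam; fun_prop
  exact (isOpen_lt continuous_const (continuous_const.mul (continuous_apply 1))).inter
    (isOpen_Ioo.preimage h)

theorem isOpen_cuspChartTarget (ε : ℝ) : IsOpen (cuspChartTarget ε) :=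
  (isOpen_Ioo.preimage (continuous_apply 0)).inter (isOpen_Ioo.preimage (continuous_apply 1))

theorem two_mul_add_one_pos_of_mem_Ioo {q : ℝ} (hε : ε ≤ 1 / 2) (hq : q ∈ Ioo (-ε) ε) :
    0 < 2 * q + 1 := by
  linarith [hq.1]

theorem radialParam_cuspChartInv (hH : H ≠ 0) {z : Fin 3 → ℝ} (hz : 0 < 2 * z 1 + 1) :
    radialParam H (cuspChartInv H E z) = z 1 := by
  simp only [radialParam, cuspChartInv, Matrix.cons_val]
  rw [mul_pow, mul_pow, div_pow, sq_sqrt hz.le]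
  field_simp
  linear_combination 4 * (2 * z 1 + 1) * sin_sq_add_cos_sq (z 0)

theorem cuspChart_cuspChartInv (hH : H ≠ 0) (hε : ε ≤ 1 / 2)
    (hE : ∀ q ∈ Ioo (-ε) ε, E q ≠ 0) {z : Fin 3 → ℝ} (hz : z ∈ cuspChartTarget ε) :
    cuspChart H E (cuspChartInv H E z) = z := by
  obtain ⟨⟨hz0, hz0'⟩, hz1⟩ := hz
  have hpos := two_mul_add_one_pos_of_mem_Ioo hε hz1
  have hR : √(2 * z 1 + 1) / (2 * H) ≠ 0 := by positivity
  have harg : arctan ((cuspChartInv H E z) 2 / (cuspChartInv H E z) 1) = z 0 := by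
    simp only [cuspChartInv, Matrix.cons_val]
    rw [mul_div_mul_left _ _ hR, ← tan_eq_sin_div_cos, arctan_tan hz0 hz0']
  have hq := radialParam_cuspChartInv (E := E) hH hpos
  have hEz := hE _ hz1
  ext i
  fin_cases i
  · exact harg
  · exact hq
  · simp only [cuspChart, Fin.reduceFinMk, Matrix.cons_val, harg, hq]
    simp only [cuspChartInv, Matrix.cons_val]
    field_simp
    ring

theorem cuspChartInv_cuspChart (hE : ∀ q ∈ Ioo (-ε) ε, E q ≠ 0) {y : Fin 3 → ℝ}
    (hy : y ∈ cuspChartSource H ε) : cuspChartInv H E (cuspChart H E y) = y := by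
  obtain ⟨hy1, hq⟩ := hy
  obtain ⟨hcos, hsin⟩ := sqrt_sq_mul_div_mul_cos_sin_arctan (c := 2 * H) (x := y 1) (y := y 2)
    (by linarith)
  rw [← two_mul_radialParam_add_one] at hcos hsin
  have hEy := hE _ hq
  ext i
  fin_cases i
  · simp only [cuspChartInv, cuspChart, Fin.reduceFinMk, Matrix.cons_val]
    field_simp
    ring
  · exact hcos
  · exact hsin

theorem mapsTo_cuspChart (H ε : ℝ) (E : ℝ → ℝ) :
    MapsTo (cuspChart H E) (cuspChartSource H ε) (cuspChartTarget ε) :=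
  fun _ hy => ⟨⟨neg_pi_div_two_lt_arctan _, arctan_lt_pi_div_two _⟩, hy.2⟩

theorem mapsTo_cuspChartInv (hH : H ≠ 0) (hε : ε ≤ 1 / 2) :
    MapsTo (cuspChartInv H E) (cuspChartTarget ε) (cuspChartSource H ε) := by
  rintro z ⟨⟨hz0, hz0'⟩, hz1⟩
  have hpos := two_mul_add_one_pos_of_mem_Ioo hε hz1
  refine ⟨?_, by rwa [radialParam_cuspChartInv hH hpos]⟩
  have hcos : 0 < cos (z 0) := cos_pos_of_mem_Ioo ⟨hz0, hz0'⟩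
  show 0 < H * (√(2 * z 1 + 1) / (2 * H) * cos (z 0))
  rw [show H * (√(2 * z 1 + 1) / (2 * H) * cos (z 0)) = √(2 * z 1 + 1) / 2 * cos (z 0) by
    field_simp]
  positivity

theorem contDiffOn_cuspChart (hE : ∀ q ∈ Ioo (-ε) ε, E q ≠ 0)
    (hEc : ContDiffOn ℝ (⊤ : ℕ∞) E (Ioo (-ε) ε)) :
    ContDiffOn ℝ (⊤ : ℕ∞) (cuspChart H E) (cuspChartSource H ε) := by
  have hy1 : ∀ y ∈ cuspChartSource H ε, y 1 ≠ 0 := fun y hy h => by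
    simpa [h] using hy.1
  have harg : ContDiffOn ℝ (⊤ : ℕ∞) (fun y : Fin 3 → ℝ => arctan (y 2 / y 1))
      (cuspChartSource H ε) :=
    contDiff_arctan.comp_contDiffOn ((contDiff_apply ℝ ℝ 2).contDiffOn.div
      (contDiff_apply ℝ ℝ 1).contDiffOn hy1)
  have hq : ContDiff ℝ (⊤ : ℕ∞) (radialParam H) := by unfold radialParam; fun_prop
  have hEq : ContDiffOn ℝ (⊤ : ℕ∞) (fun y => E (radialParam H y)) (cuspChartSource H ε) :=
    hEc.comp hq.contDiffOn fun _ hy => hy.2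
  refine contDiffOn_pi.2 fun i => ?_
  fin_cases i
  · exact harg
  · exact hq.contDiffOn
  · exact (((contDiff_apply ℝ ℝ 0).contDiffOn.add (harg.div_const _)).div hEq
      fun y hy => hE _ hy.2)

theorem contDiffOn_cuspChartInv (hε : ε ≤ 1 / 2)
    (hEc : ContDiffOn ℝ (⊤ : ℕ∞) E (Ioo (-ε) ε)) :
    ContDiffOn ℝ (⊤ : ℕ∞) (cuspChartInv H E) (cuspChartTarget ε) := by
  have hR : ContDiffOn ℝ (⊤ : ℕ∞) (fun z : Fin 3 → ℝ => √(2 * z 1 + 1) / (2 * H))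
      (cuspChartTarget ε) := fun z hz =>
    ((contDiffAt_sqrt (two_mul_add_one_pos_of_mem_Ioo hε hz.2).ne').comp z
      (by fun_prop)).contDiffWithinAt.div_const _
  have hE1 : ContDiffOn ℝ (⊤ : ℕ∞) (fun z : Fin 3 → ℝ => E (z 1)) (cuspChartTarget ε) :=
    hEc.comp (contDiff_apply ℝ ℝ 1).contDiffOn fun _ hz => hz.2
  refine contDiffOn_pi.2 fun i => ?_
  fin_cases i
  · exact ((contDiff_apply ℝ ℝ 2).contDiffOn.mul hE1).sub
      ((contDiff_apply ℝ ℝ 0).contDiffOn.div_const _)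
  · exact hR.mul (contDiff_cos.comp (contDiff_apply ℝ ℝ 0)).contDiffOn
  · exact hR.mul (contDiff_sin.comp (contDiff_apply ℝ ℝ 0)).contDiffOn

theorem isDiffeoOn_cuspChart (hH : H ≠ 0) (hε : ε ≤ 1 / 2) (hE : ∀ q ∈ Ioo (-ε) ε, E q ≠ 0)
    (hEc : ContDiffOn ℝ (⊤ : ℕ∞) E (Ioo (-ε) ε)) :
    IsDiffeoOn (cuspChart H E) (cuspChartSource H ε) (cuspChartTarget ε) :=
  .of_invOn (isOpen_cuspChartSource H ε) (isOpen_cuspChartTarget ε)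
    (contDiffOn_cuspChart hE hEc) (contDiffOn_cuspChartInv hε hEc)
    (mapsTo_cuspChart H ε E) (mapsTo_cuspChartInv hH hε)
    ⟨fun _ hy => cuspChartInv_cuspChart hE hy, fun _ hz => cuspChart_cuspChartInv hH hε hE hz⟩

end CuspChart

def twist15 (r : ℝ) : ℝ := √2 * arctan r - arctan (√2 * r)

theorem contDiff_twist15 : ContDiff ℝ (⊤ : ℕ∞) twist15 := by
  unfold twist15
  exact (contDiff_const.mul contDiff_arctan).sub
    (contDiff_arctan.comp (contDiff_const.mul contDiff_id))

theorem X15_eq_helicoidalSurface (H : ℝ) :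
    X15 H = helicoidalSurface (lam15 H) (ρ15 H) twist15 (-(1 / (2 * H))) (√2 * H) := by
  have hφ : ∀ r t, φ15 H r t = √2 * H * t + twist15 r := fun r t => by
    unfold φ15 twist15; ring
  ext p
  simp only [X15, helicoidalSurface, hφ]

theorem hasDerivAt_ρ15 (H r : ℝ) : HasDerivAt (ρ15 H) (r / (H * √(2 * r ^ 2 + 1))) r := by
  have hpos : 0 < 2 * r ^ 2 + 1 := by positivity
  have h := (((hasDerivAt_pow 2 r).const_mul 2).add_const 1).sqrt hpos.ne' |>.div_const (2 * H)
  refine h.congr_deriv ?_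
  field_simp
  ring

theorem hasDerivAt_lam15 (H r : ℝ) :
    HasDerivAt (lam15 H) (-(√2 * r ^ 4) / (H * (1 + r ^ 2) * (1 + 2 * r ^ 2))) r := by
  have h := ((((hasDerivAt_id r).const_mul √2).neg.add
    ((hasDerivAt_arctan r).const_mul (2 * √2))).sub
    (((hasDerivAt_id r).const_mul √2).arctan)).div_const (2 * H)
  refine h.congr_deriv ?_
  have h2 : √2 ^ 2 = 2 := sq_sqrt zero_le_two
  simp only [id, mul_one, mul_pow, h2]
  field_simp
  ring

theorem isSingularPt_X15_iff {H : ℝ} (hH : H ≠ 0) (p : ℝ × ℝ) :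
    IsSingularPt (X15 H) p ↔ p.1 = 0 := by
  have hc : -(1 / (2 * H)) ≠ 0 := by simpa using hH
  have hk : √2 * H ≠ 0 := by positivity
  have hg := (contDiff_twist15.differentiable (by simp) p.1).hasDerivAt
  rw [X15_eq_helicoidalSurface, isSingularPt_helicoidalSurface_iff (hasDerivAt_lam15 H p.1)
    (hasDerivAt_ρ15 H p.1) hg hc hk]
  constructor
  · rintro ⟨hρ', -⟩
    simpa [hH, (sqrt_pos.2 (by positivity : (0 : ℝ) < 2 * p.1 ^ 2 + 1)).ne'] using hρ'
  · intro hp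
    simp [hp]

def lamFactor15 (H q : ℝ) : ℝ := √2 / H * (arctanTail q - 2 * arctanTail (2 * q))

theorem lam15_eq_pow_five_mul_lamFactor15 (H : ℝ) {v : ℝ} (hv : 2 * v ^ 2 < 1) :
    lam15 H v = v ^ 5 * lamFactor15 H (v ^ 2) := by
  have h2 : √2 ^ 2 = 2 := sq_sqrt zero_le_two
  have hv1 : |v| < 1 := (sq_lt_one_iff_abs_lt_one v).1 (by linarith [sq_nonneg v])
  have hv2 : |√2 * v| < 1 := (sq_lt_one_iff_abs_lt_one _).1 (by rwa [mul_pow, h2])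
  have h3 : √2 ^ 3 = 2 * √2 := by rw [pow_succ, h2]
  have h5 : √2 ^ 5 = 4 * √2 := by rw [pow_succ, pow_succ, h3]; linear_combination 2 * √2 * h2
  rw [lam15, lamFactor15, arctan_eq_arctanTail hv1, arctan_eq_arctanTail hv2]
  simp only [mul_pow, h2, h3, h5]
  ring

theorem contDiffOn_lamFactor15 (H : ℝ) :
    ContDiffOn ℝ (⊤ : ℕ∞) (lamFactor15 H) (Ioo (-(1 / 2)) (1 / 2)) := by
  intro q hq
  have h1 : |q| < 1 := by rw [abs_lt]; constructor <;> linarith [hq.1, hq.2]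
  have h2 : |2 * q| < 1 := by rw [abs_lt]; constructor <;> linarith [hq.1, hq.2]
  have hA := (analyticAt_arctanTail h1).contDiffAt (n := (⊤ : ℕ∞))
  have hA2 := ((analyticAt_arctanTail h2).contDiffAt (n := (⊤ : ℕ∞))).comp q
    (contDiffAt_id.const_smul (2 : ℝ))
  exact (contDiffAt_const.mul (hA.sub (contDiffAt_const.mul hA2))).contDiffWithinAt

theorem exists_lamFactor15_ne_zero {H : ℝ} (hH : H ≠ 0) :
    ∃ ε, 0 < ε ∧ ε ≤ 1 / 2 ∧ ∀ q ∈ Ioo (-ε) ε, lamFactor15 H q ≠ 0 := by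
  have hcont : ContinuousAt (lamFactor15 H) 0 :=
    (contDiffOn_lamFactor15 H).continuousOn.continuousAt
      (Ioo_mem_nhds (by norm_num) (by norm_num))
  have h0 : lamFactor15 H 0 ≠ 0 := by
    rw [lamFactor15, mul_zero, arctanTail_zero]
    norm_num [hH]
  obtain ⟨δ, hδ, hne⟩ := Metric.eventually_nhds_iff.1 (hcont.eventually_ne h0)
  refine ⟨min δ (1 / 2), by positivity, min_le_right _ _, fun q hq => hne ?_⟩
  rw [Real.dist_eq, sub_zero, abs_lt]
  exact ⟨by linarith [hq.1, min_le_left δ (1 / 2)], by linarith [hq.2, min_le_left δ (1 / 2)]⟩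

theorem screwMotion_X15_helicoidalChart {H : ℝ} (hH : H ≠ 0) (t₀ : ℝ) {u v : ℝ}
    (hv : 2 * v ^ 2 < 1) :
    screwMotion (-(1 / (2 * H))) (√2 * H * t₀)
        (X15 H (helicoidalChart twist15 (√2 * H) t₀ (u, v))) =
      cuspChartInv H (lamFactor15 H) ![u, v ^ 2, v ^ 5] := by
  rw [X15_eq_helicoidalSurface, screwMotion_helicoidalSurface_helicoidalChart (by positivity)]
  ext i
  fin_cases i
  · simp only [cuspChartInv, lam15_eq_pow_five_mul_lamFactor15 H hv, Fin.reduceFinMk,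
      Matrix.cons_val]
    ring
  · rfl
  · rfl

theorem isCuspidalEdge25_X15 {H : ℝ} (hH : H ≠ 0) (t₀ : ℝ) :
    IsCuspidalEdge25 univ (X15 H) (0, t₀) := by
  obtain ⟨ε, hε0, hε, hE⟩ := exists_lamFactor15_ne_zero hH
  have hEc : ContDiffOn ℝ (⊤ : ℕ∞) (lamFactor15 H) (Ioo (-ε) ε) :=
    (contDiffOn_lamFactor15 H).mono (Ioo_subset_Ioo (by linarith) hε)
  set s : Set (ℝ × ℝ) := Ioo (-(π / 2)) (π / 2) ×ˢ Ioo (-ε) ε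
  set T := screwMotion (-(1 / (2 * H))) (√2 * H * t₀)
  have htarget : ∀ w ∈ s, ![w.1, w.2 ^ 2, w.2 ^ 5] ∈ cuspChartTarget ε := by
    rintro ⟨u, v⟩ ⟨hu, hv⟩
    refine ⟨hu, ?_, ?_⟩ <;> simp only [Matrix.cons_val] <;> nlinarith [hv.1, hv.2]
  have hnormal : ∀ w ∈ s, T (X15 H (helicoidalChart twist15 (√2 * H) t₀ w)) =
      cuspChartInv H (lamFactor15 H) ![w.1, w.2 ^ 2, w.2 ^ 5] := by
    rintro ⟨u, v⟩ ⟨-, hv⟩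
    exact screwMotion_X15_helicoidalChart hH t₀ (by nlinarith [hv.1, hv.2])
  have hmem : ∀ w ∈ s, X15 H (helicoidalChart twist15 (√2 * H) t₀ w) ∈
      T ⁻¹' cuspChartSource H ε := fun w hw => by
    rw [mem_preimage, hnormal w hw]
    exact mapsTo_cuspChartInv hH hε (htarget w hw)
  have h0 : ((0 : ℝ), (0 : ℝ)) ∈ s := ⟨by simp [pi_pos], by simpa using hε0⟩
  have hchart0 : helicoidalChart twist15 (√2 * H) t₀ (0, 0) = (0, t₀) := by
    simp [helicoidalChart, twist15]
  refine ⟨s, _, _, _, _, cuspChart H (lamFactor15 H) ∘ T, h0, hchart0, subset_univ _,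
    isDiffeoOn_helicoidalChart contDiff_twist15 (by positivity) t₀
      (isOpen_Ioo.prod isOpen_Ioo), hchart0 ▸ hmem _ h0,
    (isDiffeoOn_cuspChart hH hε hE hEc).comp
      (isDiffeoOn_screwMotion _ _ (isOpen_cuspChartSource H ε)),
    fun w hw => ⟨hmem w hw, ?_⟩⟩
  rw [Function.comp_apply, hnormal w hw, cuspChart_cuspChartInv hH hε hE (htarget w hw)]

/-- The singular points of the conjugate of a spacelike Delaunay surface with lightlike
axis (first profile) are exactly the points with `r = 0`, and every singular point is a
(2,5)-cuspidal edge. -/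
theorem conj_delaunay_lightlike_cuspidal25 (H : ℝ) (hH : H ≠ 0) :
    (∀ p : ℝ × ℝ, IsSingularPt (X15 H) p ↔ p.1 = 0) ∧
    (∀ p : ℝ × ℝ, IsSingularPt (X15 H) p → IsCuspidalEdge25 Set.univ (X15 H) p) := by
  refine ⟨isSingularPt_X15_iff hH, fun ⟨r, t₀⟩ hp => ?_⟩
  obtain rfl : r = 0 := (isSingularPt_X15_iff hH _).1 hp
  exact isCuspidalEdge25_X15 hH t₀
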